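/- arXiv:1311.3762 — 6 statements merged into one kernel-verified Lean document; each statement's English description precedes it below -/
import Mathlib

section
/- Let (M, M') be a matroid perspective on a finite set E and e ∈ E an element that is neither an isthmus nor a loop of M. Then T_{M→M'}(x,y,z) = T_{M\e → M'\e}(x,y,z) + T_{M/e → M'/e}(x,y,z). -/
/-! Split the subset sum according to whether `X` contains `e`. Since `e` is not an isthmus, it
adds nothing to the rank of some `A ⊆ E \ e`, hence (by submodularity, in the local form `hr2`)
nothing to the rank of `E \ e`; so deleting `e` keeps `r E`, and by the perspective inequality
also `r' E`. This matches the sets without `e` with the deletion. Since `e` is not a loop,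
`r {e} = 1` compensates for the element lost in `|X|`, which matches the sets containing `e` with
the contraction. -/

open Finset

/-- The Tutte polynomial of a matroid perspective, as a sum over subsets. -/
noncomputable def Tpersp {α : Type*} [DecidableEq α] (E : Finset α)
    (r r' : Finset α → ℤ) (x y z : ℝ) : ℝ :=
  ∑ X ∈ E.powerset,
    (x - 1) ^ (r' E - r' X) * (y - 1) ^ ((X.card : ℤ) - r X) *
      z ^ ((r E - r X) - (r' E - r' X))

section RankFunction

variable {α : Type*} [DecidableEq α] {E : Finset α} {r : Finset α → ℤ}

theorem rank_singleton_eq_one (hr0 : r ∅ = 0)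
    (hr1 : ∀ A ⊆ E, ∀ a ∈ E, r (insert a A) = r A ∨ r (insert a A) = r A + 1)
    {e : α} (he : e ∈ E) (hnotloop : r {e} ≠ 0) : r {e} = 1 := by
  have h := hr1 ∅ (empty_subset E) e he
  rw [insert_empty, hr0] at h
  omega

theorem rank_insert_eq_of_subset
    (hr1 : ∀ A ⊆ E, ∀ a ∈ E, r (insert a A) = r A ∨ r (insert a A) = r A + 1)
    (hr2 : ∀ A ⊆ E, ∀ a ∈ E, ∀ b ∈ E, r A = r (insert a A) → r A = r (insert b A) →
      r (insert b (insert a A)) = r A)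
    {e : α} (he : e ∈ E) {A B : Finset α} (hAB : A ⊆ B) (hB : B ⊆ E)
    (hAe : r (insert e A) = r A) : r (insert e B) = r B := by
  suffices ∀ C ⊆ E, r (insert e (A ∪ C)) = r (A ∪ C) by
    simpa [union_eq_right.mpr hAB] using this B hB
  have hA : A ⊆ E := hAB.trans hB
  intro C
  induction C using Finset.induction_on with
  | empty => simpa using hAe
  | @insert b C _ ih =>
    intro hbC
    obtain ⟨hb, hC⟩ := insert_subset_iff.mp hbC
    have hAC : A ∪ C ⊆ E := union_subset hA hC
    have hACe := ih hC
    rw [union_insert, insert_comm]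
    rcases hr1 (A ∪ C) hAC b hb with hACb | hACb
    · have := hr2 (A ∪ C) hAC e he b hb hACe.symm hACb.symm
      omega
    -- `r (A ∪ C + b + e)` lies between `r (A ∪ C + b)` and `r (A ∪ C + e) + 1 = r (A ∪ C) + 1`
    · have h₁ := hr1 (insert e (A ∪ C)) (insert_subset he hAC) b hb
      have h₂ := hr1 (insert b (A ∪ C)) (insert_subset hb hAC) e he
      rw [insert_comm] at h₂
      omega

theorem rank_erase_eq_of_not_isthmus
    (hr1 : ∀ A ⊆ E, ∀ a ∈ E, r (insert a A) = r A ∨ r (insert a A) = r A + 1)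
    (hr2 : ∀ A ⊆ E, ∀ a ∈ E, ∀ b ∈ E, r A = r (insert a A) → r A = r (insert b A) →
      r (insert b (insert a A)) = r A)
    {e : α} (he : e ∈ E) (hnotisthmus : ¬ (∀ A ⊆ E.erase e, r (insert e A) = r A + 1)) :
    r (E.erase e) = r E := by
  push Not at hnotisthmus
  obtain ⟨A, hA, hAe⟩ := hnotisthmus
  have hAe : r (insert e A) = r A :=
    (hr1 A (hA.trans (erase_subset e E)) e he).resolve_right hAe
  have := rank_insert_eq_of_subset hr1 hr2 he hA (erase_subset e E) hAe
  rwa [insert_erase he, eq_comm] at this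

end RankFunction

theorem rank_erase_eq_of_persp {α : Type*} [DecidableEq α] {E : Finset α}
    {r r' : Finset α → ℤ}
    (hr1' : ∀ A ⊆ E, ∀ a ∈ E, r' (insert a A) = r' A ∨ r' (insert a A) = r' A + 1)
    (hpersp : ∀ A B : Finset α, A ⊆ B → B ⊆ E → r B - r A ≥ r' B - r' A)
    {e : α} (he : e ∈ E) (herase : r (E.erase e) = r E) : r' (E.erase e) = r' E := by
  have h₁ := hpersp (E.erase e) E (erase_subset e E) Subset.rfl
  have h₂ := hr1' (E.erase e) (erase_subset e E) e he
  rw [insert_erase he] at h₂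
  omega

theorem Tpersp_eq_delete_add_contract {α : Type*} [DecidableEq α] {E : Finset α}
    {r r' : Finset α → ℤ} {e : α} (he : e ∈ E) (hre : r {e} = 1)
    (herase : r (E.erase e) = r E) (herase' : r' (E.erase e) = r' E) (x y z : ℝ) :
    Tpersp E r r' x y z =
      Tpersp (E.erase e) r r' x y z +
      Tpersp (E.erase e) (fun A => r (insert e A) - r {e})
        (fun A => r' (insert e A) - r' {e}) x y z := by
  unfold Tpersp
  conv_lhs => rw [← insert_erase he, sum_powerset_insert (notMem_erase e E), insert_erase he]
  beta_reduce
  rw [insert_erase he, herase, herase']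
  congr 1
  refine sum_congr rfl fun X hX => ?_
  have heX : e ∉ X := fun h => notMem_erase e E (mem_powerset.mp hX h)
  rw [card_insert_of_notMem heX, hre]
  push_cast
  ring_nf

theorem Tpersp_delete_contract_general {α : Type*} [DecidableEq α] (E : Finset α)
    (r r' : Finset α → ℤ)
    (hr0 : r ∅ = 0)
    (hr1 : ∀ A ⊆ E, ∀ a ∈ E, r (insert a A) = r A ∨ r (insert a A) = r A + 1)
    (hr1' : ∀ A ⊆ E, ∀ a ∈ E, r' (insert a A) = r' A ∨ r' (insert a A) = r' A + 1)
    (hr2 : ∀ A ⊆ E, ∀ a ∈ E, ∀ b ∈ E, r A = r (insert a A) → r A = r (insert b A) →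
      r (insert b (insert a A)) = r A)
    (hpersp : ∀ A B : Finset α, A ⊆ B → B ⊆ E → r B - r A ≥ r' B - r' A)
    (e : α) (he : e ∈ E)
    (hnotloop : r {e} ≠ 0)
    (hnotisthmus : ¬ (∀ A ⊆ E.erase e, r (insert e A) = r A + 1))
    (x y z : ℝ) :
    Tpersp E r r' x y z =
      Tpersp (E.erase e) r r' x y z +
      Tpersp (E.erase e) (fun A => r (insert e A) - r {e})
        (fun A => r' (insert e A) - r' {e}) x y z := by
  have herase := rank_erase_eq_of_not_isthmus hr1 hr2 he hnotisthmus
  exact Tpersp_eq_delete_add_contract he (rank_singleton_eq_one hr0 hr1 he hnotloop) herase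
    (rank_erase_eq_of_persp hr1' hpersp he herase) x y z

/-- Deletion-contraction for an element that is neither an isthmus nor a loop of `M`. -/
theorem Tpersp_delete_contract {α : Type*} [DecidableEq α] (E : Finset α)
    (r r' : Finset α → ℤ)
    (hr0 : r ∅ = 0) (hr0' : r' ∅ = 0)
    (hr1 : ∀ A ⊆ E, ∀ a ∈ E, r (insert a A) = r A ∨ r (insert a A) = r A + 1)
    (hr1' : ∀ A ⊆ E, ∀ a ∈ E, r' (insert a A) = r' A ∨ r' (insert a A) = r' A + 1)
    (hr2 : ∀ A ⊆ E, ∀ a ∈ E, ∀ b ∈ E, r A = r (insert a A) → r A = r (insert b A) →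
      r (insert b (insert a A)) = r A)
    (hr2' : ∀ A ⊆ E, ∀ a ∈ E, ∀ b ∈ E, r' A = r' (insert a A) → r' A = r' (insert b A) →
      r' (insert b (insert a A)) = r' A)
    (hpersp : ∀ A B : Finset α, A ⊆ B → B ⊆ E → r B - r A ≥ r' B - r' A)
    (e : α) (he : e ∈ E)
    (hnotloop : r {e} ≠ 0)
    (hnotisthmus : ¬ (∀ A ⊆ E.erase e, r (insert e A) = r A + 1))
    (x y z : ℝ) :
    Tpersp E r r' x y z =
      Tpersp (E.erase e) r r' x y z +
      Tpersp (E.erase e) (fun A => r (insert e A) - r {e})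
        (fun A => r' (insert e A) - r' {e}) x y z :=
  Tpersp_delete_contract_general E r r' hr0 hr1 hr1' hr2 hpersp e he hnotloop hnotisthmus x y z
end

section
/- Let (M, M') be a matroid perspective on a finite set E and e ∈ E an isthmus of M' (and hence of M). Then T_{M→M'}(x,y,z) = x · T_{M\e → M'\e}(x,y,z). -/
/-!
Since `r (X ∪ {e}) - r X ≥ r' (X ∪ {e}) - r' X = 1`, `e` is an isthmus of `M` as well.
Split the subsets of `E` according to whether they contain `e`: adding `e` to `X ⊆ E \ {e}`
raises both ranks by one, so the `z`-exponents of `X` and of `X ∪ {e}` agree with that of `X` in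
`E \ {e}`, while the `(x - 1)`-exponent is one larger for `X` than for `X ∪ {e}`. The pair
therefore contributes `((x - 1) + 1)` times the term of `X` in the deletion.
-/

open Finset

theorem monotoneOn_of_le_insert {α : Type*} [DecidableEq α] {E : Finset α} {r : Finset α → ℤ}
    (hr : ∀ A ⊆ E, ∀ a ∈ E, r A ≤ r (insert a A)) :
    MonotoneOn r {A | A ⊆ E} := by
  intro A hA B hB hAB
  have hunion : ∀ T ⊆ E, r A ≤ r (A ∪ T) := by
    intro T hT
    induction T using Finset.induction_on with
    | empty => simp
    | insert a S _ ih =>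
      have hS : S ⊆ E := (subset_insert a S).trans hT
      rw [union_insert]
      exact (ih hS).trans (hr _ (union_subset hA hS) a (hT (mem_insert_self a S)))
  simpa [union_sdiff_of_subset hAB] using hunion (B \ A) (sdiff_subset.trans hB)

theorem zpow_add_one_of_nonneg {G : Type*} [GroupWithZero G] (a : G) {m : ℤ} (hm : 0 ≤ m) :
    a ^ (m + 1) = a ^ m * a := by
  rw [zpow_add' (Or.inr (Or.inl (by omega))), zpow_one]

theorem Tpersp_insert_of_isthmus {α : Type*} [DecidableEq α] {E : Finset α} {e : α}
    (heE : e ∉ E) (r r' : Finset α → ℤ)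
    (hr : ∀ X ⊆ E, r (insert e X) = r X + 1) (hr' : ∀ X ⊆ E, r' (insert e X) = r' X + 1)
    (hr'_le : ∀ X ⊆ E, r' X ≤ r' E) (x y z : ℝ) :
    Tpersp (insert e E) r r' x y z = x * Tpersp E r r' x y z := by
  unfold Tpersp
  rw [sum_powerset_insert heE, ← sum_add_distrib, mul_sum]
  refine sum_congr rfl fun X hX => ?_
  have hXE : X ⊆ E := mem_powerset.mp hX
  have hcard : ((insert e X).card : ℤ) = X.card + 1 := by
    rw [card_insert_of_notMem fun h => heE (hXE h), Nat.cast_succ]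
  set m := r' E - r' X
  -- `m ≥ 0` matters at `x = 1`, where `0 ^ 0 = 1` but `0 ^ (-1) * 0 = 0`.
  have hx : (x - 1) ^ (r' E + 1 - r' X) = (x - 1) ^ m * (x - 1) := by
    rw [← zpow_add_one_of_nonneg _ (sub_nonneg.mpr (hr'_le X hXE))]
    ring_nf
  rw [hr X hXE, hr' X hXE, hr E subset_rfl, hr' E subset_rfl, hcard, hx,
    show r' E + 1 - (r' X + 1) = m by ring,
    show (X.card : ℤ) + 1 - (r X + 1) = X.card - r X by ring,
    show r E + 1 - r X - (r' E + 1 - r' X) = r E - r X - m by ring,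
    show r E + 1 - (r X + 1) - m = r E - r X - m by ring]
  ring

theorem Tpersp_isthmus_general {α : Type*} [DecidableEq α] (E : Finset α)
    (r r' : Finset α → ℤ)
    (hr1 : ∀ A ⊆ E, ∀ a ∈ E, r (insert a A) = r A ∨ r (insert a A) = r A + 1)
    (hr1' : ∀ A ⊆ E, ∀ a ∈ E, r' (insert a A) = r' A ∨ r' (insert a A) = r' A + 1)
    (hpersp : ∀ A B : Finset α, A ⊆ B → B ⊆ E → r B - r A ≥ r' B - r' A)
    (e : α) (he : e ∈ E)
    (histhmus' : ∀ A ⊆ E.erase e, r' (insert e A) = r' A + 1)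
    (x y z : ℝ) :
    Tpersp E r r' x y z = x * Tpersp (E.erase e) r r' x y z := by
  have histhmus : ∀ A ⊆ E.erase e, r (insert e A) = r A + 1 := by
    intro A hA
    have hAE : A ⊆ E := hA.trans (erase_subset e E)
    have := hpersp A (insert e A) (subset_insert e A) (insert_subset he hAE)
    have := hr1 A hAE e he
    have := histhmus' A hA
    omega
  have hmono : MonotoneOn r' {A | A ⊆ E} := monotoneOn_of_le_insert fun A hA a ha => by
    rcases hr1' A hA a ha with h | h <;> omega
  have hle : ∀ X ⊆ E.erase e, r' X ≤ r' (E.erase e) := fun X hX =>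
    hmono (hX.trans (erase_subset e E)) (erase_subset e E) hX
  conv_lhs => rw [← insert_erase he]
  exact Tpersp_insert_of_isthmus (notMem_erase e E) r r' histhmus histhmus' hle x y z

/-- If `e` is an isthmus of `M'` (hence of `M`), then `T = x · T_{delete}`. -/
theorem Tpersp_isthmus {α : Type*} [DecidableEq α] (E : Finset α)
    (r r' : Finset α → ℤ)
    (hr0 : r ∅ = 0) (hr0' : r' ∅ = 0)
    (hr1 : ∀ A ⊆ E, ∀ a ∈ E, r (insert a A) = r A ∨ r (insert a A) = r A + 1)
    (hr1' : ∀ A ⊆ E, ∀ a ∈ E, r' (insert a A) = r' A ∨ r' (insert a A) = r' A + 1)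
    (hr2 : ∀ A ⊆ E, ∀ a ∈ E, ∀ b ∈ E, r A = r (insert a A) → r A = r (insert b A) →
      r (insert b (insert a A)) = r A)
    (hr2' : ∀ A ⊆ E, ∀ a ∈ E, ∀ b ∈ E, r' A = r' (insert a A) → r' A = r' (insert b A) →
      r' (insert b (insert a A)) = r' A)
    (hpersp : ∀ A B : Finset α, A ⊆ B → B ⊆ E → r B - r A ≥ r' B - r' A)
    (e : α) (he : e ∈ E)
    (histhmus' : ∀ A ⊆ E.erase e, r' (insert e A) = r' A + 1)
    (x y z : ℝ) :
    Tpersp E r r' x y z = x * Tpersp (E.erase e) r r' x y z :=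
  Tpersp_isthmus_general E r r' hr1 hr1' hpersp e he histhmus' x y z
end

section
/- Let E be a finite set, ρ : P(E) → ℕ a 'region-count' function and c : P(E) → ℕ a 'component-count' function of a graph on edge sets, such that for all A ⊆ E and e ∉ A: if c(A) − c(A ∪ {e}) = 1 then ρ(A ∪ {e}) = ρ(A). Then the function r(A) := |A| − ρ(A) + ρ(∅), together with the cycle-matroid rank function r'(A) := v − c(A) (v a constant), satisfies the matroid perspective inequality r(B) − r(A) ≥ r'(B) − r'(A) for all A ⊆ B ⊆ E, provided r and r' are matroid rank functions. -/
/-!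
Adding one edge `e` raises `|A|` by one, raises `ρ` by at most one, and lowers `c` by at most
one, with `ρ` unchanged whenever `c` drops (`e` is a bridge). Hence
`A ↦ |A| - ρ(A) + c(A)` does not decrease when an edge is added, and so is monotone on subsets
of `E`; this is the perspective inequality rearranged.
-/

namespace Finset

variable {α β : Type*} [DecidableEq α] [Preorder β]

theorem le_of_subset_of_forall_le_insert {f : Finset α → β} {E : Finset α}
    (hf : ∀ A ⊆ E, ∀ e ∈ E, e ∉ A → f A ≤ f (insert e A)) {A B : Finset α}
    (hAB : A ⊆ B) (hBE : B ⊆ E) : f A ≤ f B := by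
  suffices ∀ S ⊆ B \ A, f A ≤ f (A ∪ S) by
    simpa [union_sdiff_of_subset hAB] using this (B \ A) subset_rfl
  intro S hS
  induction S using Finset.induction_on with
  | empty => simp
  | @insert e S heS ih =>
    have heBA : e ∈ B \ A := hS (mem_insert_self e S)
    have hSBA : S ⊆ B \ A := (subset_insert e S).trans hS
    have hASB : A ∪ S ⊆ B := union_subset hAB (hSBA.trans sdiff_subset)
    have heAS : e ∉ A ∪ S := by simp [(mem_sdiff.mp heBA).2, heS]
    rw [union_insert]
    exact (ih hSBA).trans (hf _ (hASB.trans hBE) e (hBE (mem_sdiff.mp heBA).1) heAS)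

end Finset

/-- The bond matroid of `G†` together with the cycle matroid of `G` forms a matroid
perspective: the perspective inequality holds for the rank functions
`r(A) = |A| − ρ(A) + ρ(∅)` and `r'(A) = v − c(A)`. -/
theorem dagger_perspective {α : Type*} [DecidableEq α] (E : Finset α) (v : ℤ)
    (ρ c : Finset α → ℕ)
    (hρstep : ∀ A ⊆ E, ∀ e ∈ E, e ∉ A → ρ (insert e A) = ρ A ∨ ρ (insert e A) = ρ A + 1)
    (hcstep : ∀ A ⊆ E, ∀ e ∈ E, e ∉ A → c (insert e A) = c A ∨ c A = c (insert e A) + 1)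
    (hbridge : ∀ A ⊆ E, ∀ e ∈ E, e ∉ A → c A = c (insert e A) + 1 → ρ (insert e A) = ρ A) :
    ∀ A B : Finset α, A ⊆ B → B ⊆ E →
      ((B.card : ℤ) - (ρ B : ℤ) + (ρ ∅ : ℤ)) - ((A.card : ℤ) - (ρ A : ℤ) + (ρ ∅ : ℤ)) ≥
      (v - (c B : ℤ)) - (v - (c A : ℤ)) := by
  intro A B hAB hBE
  have single_edge : ∀ A ⊆ E, ∀ e ∈ E, e ∉ A →
      (A.card : ℤ) - ρ A + c A ≤ (insert e A).card - ρ (insert e A) + c (insert e A) := by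
    intro A hA e he heA
    rw [Finset.card_insert_of_notMem heA]
    have := hρstep A hA e he heA
    have := hcstep A hA e he heA
    have := hbridge A hA e he heA
    omega
  have := Finset.le_of_subset_of_forall_le_insert single_edge hAB hBE
  linarith
end

section
/- Let G be a ribbon graph and A ⊆ E(G). Suppose the spanning ribbon subgraph G − A^c (edge set A) of G is a quasi-tree, i.e., is connected with exactly one boundary component. Then the complementary spanning ribbon subgraph of the geometric dual, G* − A (edge set A^c), is also a quasi-tree, and moreover γ(G − A^c) + γ(G* − A) = γ(G). -/
/-- If the spanning ribbon subgraph of `G` on edge set `A` is a quasi-tree, then so is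
the complementary spanning ribbon subgraph of the dual `G*` on edge set `Aᶜ`, and
`γ_G(A) + γ_{G*}(Aᶜ) = γ(G)`. -/
theorem quasi_tree_duality {β : Type*} [DecidableEq β] (Edges : Finset β)
    (vG vGd : ℤ) (fG cG γG fGd cGd γGd : Finset β → ℤ)
    (heulerG : ∀ X ⊆ Edges, vG - (X.card : ℤ) + fG X = 2 * cG X - γG X)
    (heulerGd : ∀ X ⊆ Edges, vGd - (X.card : ℤ) + fGd X = 2 * cGd X - γGd X)
    (hbound : ∀ X ⊆ Edges, fG X = fGd (Edges \ X))
    (hvGd : vGd = fG Edges)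
    (hcG : cG Edges = 1)
    (honeface_conn : ∀ X ⊆ Edges, fGd X = 1 → cGd X = 1)
    (A : Finset β) (hA : A ⊆ Edges)
    (hqt_f : fG A = 1) (hqt_c : cG A = 1) :
    (fGd (Edges \ A) = 1 ∧ cGd (Edges \ A) = 1) ∧
      γG A + γGd (Edges \ A) = γG Edges := by
  have hf : fGd (Edges \ A) = 1 := hbound A hA ▸ hqt_f
  have hc : cGd (Edges \ A) = 1 := honeface_conn _ Finset.sdiff_subset hf
  refine ⟨⟨hf, hc⟩, ?_⟩
  have hcard : ((Edges \ A).card : ℤ) + A.card = Edges.card := by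
    exact_mod_cast Finset.card_sdiff_add_card_eq_card hA
  -- The Euler relations of the two quasi-trees add up to that of `G`: their edges partition
  -- `E(G)` and their vertices are those of `G` and of `G*`, i.e. the faces of `G`.
  linarith [heulerG A hA, heulerGd (Edges \ A) Finset.sdiff_subset, heulerG Edges subset_rfl]
end

section
/- Let G be a cellularly embedded graph in a surface with dual G*, and A ⊆ E(G) with complement A^c. Assuming Euler's formula for all spanning ribbon subgraphs and the facts f_{G*}(A^c) = f_G(A), f(G*) = v(G), c-relations as in ribbon graph duality, the rank function of the bond matroid of the dual satisfies: 2·r_{B(G*)}(A) = 2·r_G(A) + γ(G) + γ_G(A) − γ_{G*}(A^c). -/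
theorem bond_rank_topological_general {β : Type*} [DecidableEq β] (Edges : Finset β)
    (vG vGd : ℤ) (fG cG γG fGd cGd γGd : Finset β → ℤ)
    (heulerG : ∀ X ⊆ Edges, vG - (X.card : ℤ) + fG X = 2 * cG X - γG X)
    (heulerGd : ∀ X ⊆ Edges, vGd - (X.card : ℤ) + fGd X = 2 * cGd X - γGd X)
    (hbound : ∀ X ⊆ Edges, fGd (Edges \ X) = fG X)
    (hvGd : vGd = fG Edges) (hc : cGd Edges = cG Edges)
    (A : Finset β) (hA : A ⊆ Edges) :
    2 * ((A.card : ℤ) + (vGd - cGd (Edges \ A)) - (vGd - cGd Edges)) =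
      2 * (vG - cG A) + γG Edges + γG A - γGd (Edges \ A) := by
  -- Solving the three Euler formulas for the genera, every vertex and face count cancels
  -- once `f_{G*}(Aᶜ) = f_G(A)` and `v(G*) = f(G)` are substituted.
  have eulerG := heulerG Edges subset_rfl
  have eulerA := heulerG A hA
  have eulerDualCompl := heulerGd (Edges \ A) Finset.sdiff_subset
  have card_compl : ((Edges \ A).card : ℤ) = Edges.card - A.card := Finset.cast_card_sdiff hA
  rw [hbound A hA, hvGd, card_compl] at eulerDualCompl
  linarith

/-- Key computation for rewriting the Las Vergnas polynomial:
`2 r_{B(G*)}(A) = 2 r_G(A) + γ(G) + γ_G(A) − γ_{G*}(Aᶜ)`. -/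
theorem bond_rank_topological {β : Type*} [DecidableEq β] (Edges : Finset β)
    (vG vGd : ℤ) (fG cG γG fGd cGd γGd : Finset β → ℤ)
    (heulerG : ∀ X ⊆ Edges, vG - (X.card : ℤ) + fG X = 2 * cG X - γG X)
    (heulerGd : ∀ X ⊆ Edges, vGd - (X.card : ℤ) + fGd X = 2 * cGd X - γGd X)
    (hbound : ∀ X ⊆ Edges, fGd (Edges \ X) = fG X)
    (hfGd : fGd Edges = vG) (hvGd : vGd = fG Edges) (hc : cGd Edges = cG Edges)
    (A : Finset β) (hA : A ⊆ Edges) :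
    2 * ((A.card : ℤ) + (vGd - cGd (Edges \ A)) - (vGd - cGd Edges)) =
      2 * (vG - cG A) + γG Edges + γG A - γGd (Edges \ A) :=
  bond_rank_topological_general Edges vG vGd fG cG γG fGd cGd γGd heulerG heulerGd hbound hvGd hc A
    hA
end

section
/- Let G be a connected graph with dichromatic-type data: for the Bollobás–Riordan polynomial R_G(x,y,z) = Σ_{A⊆E} (x−1)^{r(E)−r(A)} y^{n(A)} z^{γ(A)} of a connected ribbon graph G, the evaluation t·R_G(t+1, t, 1/t) = Σ_{A⊆E(G)} t^{f(A)}, where f(A) is the number of boundary components of the spanning ribbon subgraph (V, A). -/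
open Finset

/-- The exponents are `r(E) - r(A)`, `n(A)` and `γ(A)` with `r(A) = v - c(A)` and `r(E) = v - 1`;
Euler's formula makes them add up to `f(A) - 1`. -/
theorem mul_zpow_rank_nullity_genus_eq_zpow_faces {G₀ : Type*} [CommGroupWithZero G₀]
    {t : G₀} (ht : t ≠ 0) {v c n γ f : ℤ} (heuler : v - n + f = 2 * c - γ) :
    t * (t ^ ((v - 1) - (v - c)) * t ^ (n - (v - c)) * t⁻¹ ^ γ) = t ^ f := by
  have hf : f = 1 + ((v - 1) - (v - c)) + (n - (v - c)) + -γ := by linarith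
  rw [hf, inv_zpow, ← zpow_neg, zpow_add₀ ht, zpow_add₀ ht, zpow_add₀ ht, zpow_one, mul_assoc,
    mul_assoc, mul_assoc]

theorem BR_evaluation_boundary_general {β : Type*} (Edges : Finset β) (v : ℤ)
    (c f γ : Finset β → ℤ)
    (heuler : ∀ A ⊆ Edges, v - (A.card : ℤ) + f A = 2 * c A - γ A)
    (t : ℝ) (ht : t ≠ 0) :
    t * ∑ A ∈ Edges.powerset,
        t ^ ((v - 1) - (v - c A)) * t ^ ((A.card : ℤ) - (v - c A)) * (t⁻¹) ^ (γ A) =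
    ∑ A ∈ Edges.powerset, t ^ (f A) := by
  rw [mul_sum]
  exact sum_congr rfl fun A hA =>
    mul_zpow_rank_nullity_genus_eq_zpow_faces ht (heuler A (mem_powerset.mp hA))

/-- For a connected ribbon graph `G`,
`t · R_G(t+1, t, 1/t) = Σ_{A ⊆ E} t^{f(A)}`. -/
theorem BR_evaluation_boundary {β : Type*} [DecidableEq β] (Edges : Finset β) (v : ℤ)
    (c f γ : Finset β → ℤ)
    (heuler : ∀ A ⊆ Edges, v - (A.card : ℤ) + f A = 2 * c A - γ A)
    (hconn : c Edges = 1) (t : ℝ) (ht : t ≠ 0) :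
    t * ∑ A ∈ Edges.powerset,
        t ^ ((v - 1) - (v - c A)) * t ^ ((A.card : ℤ) - (v - c A)) * (t⁻¹) ^ (γ A) =
    ∑ A ∈ Edges.powerset, t ^ (f A) :=
  BR_evaluation_boundary_general Edges v c f γ heuler t ht
end
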